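/- Hölder-type lower bound used in the metric-graph rearrangement: if w : Γ → [0,∞) is Sobolev on a metric graph Γ of total length L, vanishing at a Dirichlet vertex, and v : [0,L] → ℝ is the monotone increasing rearrangement of w (|{v ≤ τ}| = H¹({w ≤ τ}) for all τ), then ½∫₀^L |v'|² dx - ∫₀^L v dx ≤ ½∫_Γ |w'|² dH¹ - ∫_Γ w dH¹ (one-dimensional Pólya–Szegő inequality on graphs). -/

import Mathlib

/-!
Both sides split into a mass term and an energy term. The masses agree because `v` and `w` are
equidistributed on `[0, L]`. For the energies, put `G y = ∫_{w ≤ v y} |w'|²`. Given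
`0 < y < y' < L`, follow `w` from `0` (where `w = 0 ≤ v y`) up to its first crossing of the
level `v y'`. The last stretch between the levels `v y` and `v y'` is an interval `(α, β)`,
and `β - α ≤ y' - y` because `(α, β)` lies in the band `{v y < w < v y'}`, which has the same
measure as `{v y < v < v y'} ⊆ [y, y']`. So Cauchy–Schwarz on `(α, β)` gives
`(v y' - v y)² ≤ (y' - y) (G y' - G y)`. Then `v'² ≤ G'` almost everywhere, and the integral
of the derivative of the monotone function `G` is at most `G L - G 0 ≤ ∫ |w'|²`.
-/

open MeasureTheory Set intervalIntegral Filter Topology ProbabilityTheory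

theorem ProbabilityTheory.identDistrib_of_measure_preimage_Iic_eq {α β : Type*}
    [MeasurableSpace α] [MeasurableSpace β] {μ : Measure α} {ν : Measure β}
    [IsFiniteMeasure μ]
    {f : α → ℝ} {g : β → ℝ} (hf : AEMeasurable f μ) (hg : AEMeasurable g ν)
    (h : ∀ τ, μ (f ⁻¹' Iic τ) = ν (g ⁻¹' Iic τ)) : IdentDistrib f g μ ν where
  aemeasurable_fst := hf
  aemeasurable_snd := hg
  map_eq := Measure.ext_of_Iic _ _ fun τ => by
    rw [Measure.map_apply_of_aemeasurable hf measurableSet_Iic,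
      Measure.map_apply_of_aemeasurable hg measurableSet_Iic, h]

theorem sq_intervalIntegral_le {f : ℝ → ℝ} {a b : ℝ} (hab : a ≤ b)
    (hf : IntervalIntegrable f volume a b)
    (hf2 : IntervalIntegrable (fun x => f x ^ 2) volume a b) :
    (∫ x in a..b, f x) ^ 2 ≤ (b - a) * ∫ x in a..b, f x ^ 2 := by
  rcases hab.eq_or_lt with rfl | hlt
  · simp
  set I := ∫ x in a..b, f x
  set c := I / (b - a)
  have hcI : c * (b - a) = I := div_mul_cancel₀ _ (sub_pos.2 hlt).ne'
  have hvar : 0 ≤ ∫ x in a..b, (f x - c) ^ 2 := integral_nonneg hab fun x _ => sq_nonneg _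
  have hexpand :
      ∫ x in a..b, (f x - c) ^ 2 = (∫ x in a..b, f x ^ 2) - 2 * c * I + c ^ 2 * (b - a) := by
    have hsq : ∀ x, (f x - c) ^ 2 = f x ^ 2 - 2 * c * f x + c ^ 2 := fun x => by ring
    simp only [hsq]
    rw [integral_add (hf2.sub (hf.const_mul _)) intervalIntegrable_const,
      integral_sub hf2 (hf.const_mul _), intervalIntegral.integral_const_mul,
      intervalIntegral.integral_const, smul_eq_mul]
    ring
  nlinarith [mul_nonneg (sub_pos.2 hlt).le hvar]

theorem exists_Ioo_crossing {w : ℝ → ℝ} {a p t₁ t₂ : ℝ} (hw : ContinuousOn w (Icc a p))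
    (hap : a ≤ p) (ha : w a ≤ t₁) (hp : t₂ ≤ w p) (ht : t₁ < t₂) :
    ∃ α β, a ≤ α ∧ α < β ∧ β ≤ p ∧ w α ≤ t₁ ∧ t₂ ≤ w β ∧
      ∀ x ∈ Ioo α β, t₁ < w x ∧ w x < t₂ := by
  set B := Icc a p ∩ w ⁻¹' Ici t₂
  have hBbdd : BddBelow B := ⟨a, fun x hx => hx.1.1⟩
  have hβ : sInf B ∈ B := (hw.preimage_isClosed_of_isClosed isClosed_Icc isClosed_Ici).csInf_mem
    ⟨p, ⟨hap, le_rfl⟩, hp⟩ hBbdd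
  set β := sInf B
  set A := Icc a β ∩ w ⁻¹' Iic t₁
  have hAbdd : BddAbove A := ⟨β, fun x hx => hx.1.2⟩
  have hα : sSup A ∈ A :=
    ((hw.mono (Icc_subset_Icc_right hβ.1.2)).preimage_isClosed_of_isClosed isClosed_Icc
      isClosed_Iic).csSup_mem ⟨a, ⟨le_rfl, hβ.1.1⟩, ha⟩ hAbdd
  set α := sSup A
  have hαβ : α ≠ β := ne_of_apply_ne w (hα.2.trans_lt (ht.trans_le hβ.2)).ne
  refine ⟨α, β, hα.1.1, hα.1.2.lt_of_ne hαβ, hβ.1.2, hα.2, hβ.2,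
    fun x hx => ⟨?_, ?_⟩⟩
  · by_contra! h
    exact (le_csSup hAbdd ⟨⟨hα.1.1.trans hx.1.le, hx.2.le⟩, h⟩).not_gt hx.1
  · by_contra! h
    exact (csInf_le hBbdd ⟨⟨hα.1.1.trans hx.1.le, hx.2.le.trans hβ.1.2⟩, h⟩).not_gt hx.2

theorem sq_deriv_le_deriv_of_sq_sub_le {v G : ℝ → ℝ} {x : ℝ} (hv : DifferentiableAt ℝ v x)
    (hG : DifferentiableAt ℝ G x)
    (h : ∀ᶠ y in 𝓝[>] x, (v y - v x) ^ 2 ≤ (y - x) * (G y - G x)) :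
    deriv v x ^ 2 ≤ deriv G x := by
  refine le_of_tendsto_of_tendsto
    ((hv.hasDerivAt.tendsto_slope.mono_left (nhdsGT_le_nhdsNE x)).pow 2)
    (hG.hasDerivAt.tendsto_slope.mono_left (nhdsGT_le_nhdsNE x)) ?_
  filter_upwards [h, self_mem_nhdsWithin] with y hy (hxy : x < y)
  have hpos : 0 < y - x := sub_pos.2 hxy
  rw [slope_def_field, slope_def_field, div_pow, div_le_div_iff₀ (by positivity) hpos]
  calc (v y - v x) ^ 2 * (y - x) ≤ (y - x) * (G y - G x) * (y - x) :=
        mul_le_mul_of_nonneg_right hy hpos.le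
    _ = (G y - G x) * (y - x) ^ 2 := by ring

theorem integral_sq_deriv_le_of_sq_sub_le {v G : ℝ → ℝ} {a b : ℝ} (hab : a ≤ b)
    (hv : DifferentiableOn ℝ v (Ioo a b)) (hG : MonotoneOn G (Icc a b))
    (h : ∀ y ∈ Ioo a b, ∀ y' ∈ Ioo y b, (v y' - v y) ^ 2 ≤ (y' - y) * (G y' - G y)) :
    ∫ x in a..b, deriv v x ^ 2 ≤ G b - G a := by
  have hG' : MonotoneOn G (uIcc a b) := by rwa [uIcc_of_le hab]
  have hGab : G a ≤ G b := hG (left_mem_Icc.2 hab) (right_mem_Icc.2 hab) hab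
  have hderiv_le : ∫ x in a..b, deriv G x ≤ G b - G a := by
    have hmem := hG'.intervalIntegral_deriv_mem_uIcc
    rw [uIcc_of_le (sub_nonneg.2 hGab)] at hmem
    exact hmem.2
  have hpointwise : ∀ᵐ x ∂volume.restrict (Ioo a b), deriv v x ^ 2 ≤ deriv G x := by
    rw [ae_restrict_iff' measurableSet_Ioo]
    filter_upwards [hG.ae_differentiableWithinAt_of_mem] with x hGx hx
    refine sq_deriv_le_deriv_of_sq_sub_le (hv.differentiableAt (isOpen_Ioo.mem_nhds hx))
      ((hGx (Ioo_subset_Icc_self hx)).differentiableAt (Icc_mem_nhds hx.1 hx.2)) ?_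
    filter_upwards [Ioo_mem_nhdsGT hx.2] with y hy using h x hx y hy
  calc ∫ x in a..b, deriv v x ^ 2 = ∫ x in Ioo a b, deriv v x ^ 2 := by
        rw [integral_of_le hab, integral_Ioc_eq_integral_Ioo]
    _ ≤ ∫ x in Ioo a b, deriv G x :=
        integral_mono_of_nonneg (ae_of_all _ fun x => sq_nonneg _)
          (hG'.intervalIntegrable_deriv.1.mono_set Ioo_subset_Ioc_self) hpointwise
    _ = ∫ x in a..b, deriv G x := by rw [integral_of_le hab, integral_Ioc_eq_integral_Ioo]
    _ ≤ G b - G a := hderiv_le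

noncomputable def sublevelEnergy (μ : Measure ℝ) (w : ℝ → ℝ) (t : ℝ) : ℝ :=
  ∫ x in {x | w x ≤ t}, deriv w x ^ 2 ∂μ

section sublevelEnergy

variable {μ : Measure ℝ} {w : ℝ → ℝ}

theorem sublevelEnergy_nonneg (t : ℝ) : 0 ≤ sublevelEnergy μ w t :=
  integral_nonneg fun _ => sq_nonneg _

theorem sublevelEnergy_mono (hint : Integrable (fun x => deriv w x ^ 2) μ) :
    Monotone (sublevelEnergy μ w) := fun _ _ ht =>
  setIntegral_mono_set hint.integrableOn (ae_of_all _ fun _ => sq_nonneg _)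
    (Eventually.of_forall fun _ (hx : _ ≤ _) => hx.trans ht)

theorem sublevelEnergy_le_integral (hint : Integrable (fun x => deriv w x ^ 2) μ) (t : ℝ) :
    sublevelEnergy μ w t ≤ ∫ x, deriv w x ^ 2 ∂μ :=
  setIntegral_le_integral hint (ae_of_all _ fun _ => sq_nonneg _)

theorem setIntegral_add_sublevelEnergy_le (hw : Measurable w)
    (hint : Integrable (fun x => deriv w x ^ 2) μ) {S : Set ℝ} {t₁ t₂ : ℝ}
    (ht : t₁ ≤ t₂)
    (hSw : ∀ x ∈ S, t₁ < w x ∧ w x ≤ t₂) :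
    ∫ x in S, deriv w x ^ 2 ∂μ + sublevelEnergy μ w t₁ ≤ sublevelEnergy μ w t₂ := by
  have hdisj : Disjoint S {x | w x ≤ t₁} :=
    disjoint_left.2 fun x hxS hx => (hSw x hxS).1.not_ge hx
  rw [sublevelEnergy, ← setIntegral_union hdisj (measurableSet_le hw measurable_const)
    hint.integrableOn hint.integrableOn]
  refine setIntegral_mono_set hint.integrableOn (ae_of_all _ fun _ => sq_nonneg _)
    (Eventually.of_forall (union_subset (fun x hx => (hSw x hx).2) fun _ hx => hx.trans ht))

end sublevelEnergy

section Rearrangement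

variable {L : ℝ} {v w : ℝ → ℝ}

theorem exists_mem_Icc_of_Ioo_subset
    (hident : IdentDistrib v w (volume.restrict (Icc 0 L)) (volume.restrict (Icc 0 L)))
    {S : Set ℝ} (hS : MeasurableSet S) {a b : ℝ} (hab : a < b) (hsub : Ioo a b ⊆ Icc 0 L)
    (hvS : ∀ x ∈ Ioo a b, v x ∈ S) : ∃ x ∈ Icc 0 L, w x ∈ S := by
  have hpos : 0 < volume.restrict (Icc 0 L) (w ⁻¹' S) := by
    rw [← hident.measure_mem_eq hS]
    calc 0 < volume (Ioo a b) := by simpa using hab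
      _ = volume.restrict (Icc 0 L) (Ioo a b) := (Measure.restrict_eq_self _ hsub).symm
      _ ≤ _ := measure_mono hvS
  rw [Measure.restrict_apply' measurableSet_Icc] at hpos
  obtain ⟨x, hxS, hx⟩ := nonempty_of_measure_ne_zero hpos.ne'
  exact ⟨x, hx, hxS⟩

theorem sub_le_sub_of_Ioo_subset_band (hmono : MonotoneOn v (Icc 0 L))
    (hident : IdentDistrib v w (volume.restrict (Icc 0 L)) (volume.restrict (Icc 0 L)))
    {y y' α β : ℝ} (hy : y ∈ Icc 0 L) (hy' : y' ∈ Icc 0 L) (hlt : v y < v y')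
    (hsub : Ioo α β ⊆ Icc 0 L) (hband : ∀ x ∈ Ioo α β, v y < w x ∧ w x < v y') :
    β - α ≤ y' - y := by
  set μ := volume.restrict (Icc (0 : ℝ) L)
  have hlow : ENNReal.ofReal y ≤ μ (w ⁻¹' Iic (v y)) := by
    rw [← hident.measure_mem_eq measurableSet_Iic]
    calc ENNReal.ofReal y = volume (Icc 0 y) := by simp
      _ = μ (Icc 0 y) := (Measure.restrict_eq_self _ (Icc_subset_Icc_right hy.2)).symm
      _ ≤ μ (v ⁻¹' Iic (v y)) :=
          measure_mono fun x hx => hmono ⟨hx.1, hx.2.trans hy.2⟩ hy hx.2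
  have hup : μ (w ⁻¹' Iio (v y')) ≤ ENNReal.ofReal y' := by
    rw [← hident.measure_mem_eq measurableSet_Iio, Measure.restrict_apply' measurableSet_Icc]
    calc volume (v ⁻¹' Iio (v y') ∩ Icc 0 L) ≤ volume (Icc 0 y') := measure_mono fun x hx =>
          ⟨hx.2.1, le_of_not_gt fun h => (hmono hy' hx.2 h.le).not_gt hx.1⟩
      _ = ENNReal.ofReal y' := by simp
  have hsplit : μ (Ioo α β) + μ (w ⁻¹' Iic (v y)) ≤ μ (w ⁻¹' Iio (v y')) := by
    have hdisj : Disjoint (Ioo α β) (w ⁻¹' Iic (v y)) :=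
      disjoint_left.2 fun x hx hwx => (hband x hx).1.not_ge hwx
    rw [← measure_union' hdisj measurableSet_Ioo]
    exact measure_mono (union_subset (fun x hx => (hband x hx).2) fun _ hx => hx.trans_lt hlt)
  have hμIoo : μ (Ioo α β) = ENNReal.ofReal (β - α) := by
    rw [Measure.restrict_eq_self _ hsub, Real.volume_Ioo]
  have hreal : ENNReal.ofReal (β - α + y) ≤ ENNReal.ofReal y' :=
    ENNReal.ofReal_add_le.trans (hμIoo ▸ (add_le_add le_rfl hlow).trans (hsplit.trans hup))
  linarith [(ENNReal.ofReal_le_ofReal_iff hy'.1).1 hreal]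

theorem sq_sub_le_mul_sublevelEnergy_sub (hw : ContDiff ℝ 1 w) (hw0 : w 0 = 0)
    (hwpos : ∀ x, 0 ≤ w x) (hmono : MonotoneOn v (Icc 0 L))
    (hident : IdentDistrib v w (volume.restrict (Icc 0 L)) (volume.restrict (Icc 0 L)))
    {y y' : ℝ} (hy : y ∈ Ioo 0 L) (hy' : y' ∈ Ioo y L) :
    (v y' - v y) ^ 2 ≤ (y' - y) * (sublevelEnergy (volume.restrict (Icc 0 L)) w (v y') -
      sublevelEnergy (volume.restrict (Icc 0 L)) w (v y)) := by
  set E := sublevelEnergy (volume.restrict (Icc 0 L)) w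
  have hw' : Continuous (deriv w) := hw.continuous_deriv le_rfl
  have hint : Integrable (fun x => deriv w x ^ 2) (volume.restrict (Icc 0 L)) :=
    (hw'.pow 2).integrableOn_Icc
  have hyL : y ∈ Icc 0 L := Ioo_subset_Icc_self hy
  have hy'L : y' ∈ Icc 0 L := ⟨hy.1.le.trans hy'.1.le, hy'.2.le⟩
  rcases (hmono hyL hy'L hy'.1.le).eq_or_lt with heq | hlt
  · rw [heq, sub_self, sub_self]
    simp
  have h0y : Ioo 0 y ⊆ Icc 0 L := fun x hx => ⟨hx.1.le, hx.2.le.trans hyL.2⟩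
  have hy'L' : Ioo y' L ⊆ Icc 0 L := fun x hx => ⟨hy'L.1.trans hx.1.le, hx.2.le⟩
  -- `w` attains both levels on `[0, L]`, as `{v ≤ v y}` and `{v ≥ v y'}` have positive measure.
  obtain ⟨x₀, -, hwx₀⟩ : ∃ x ∈ Icc 0 L, w x ∈ Iic (v y) :=
    exists_mem_Icc_of_Ioo_subset hident measurableSet_Iic hy.1 h0y
      fun x hx => hmono (h0y hx) hyL hx.2.le
  obtain ⟨p, hp, hwp⟩ : ∃ x ∈ Icc 0 L, w x ∈ Ici (v y') :=
    exists_mem_Icc_of_Ioo_subset hident measurableSet_Ici hy'.2 hy'L'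
      fun x hx => hmono hy'L (hy'L' hx) hx.1.le
  obtain ⟨α, β, hα, hαβ, hβ, hwα, hwβ, hband⟩ :=
    exists_Ioo_crossing hw.continuous.continuousOn hp.1 (hw0.trans_le ((hwpos x₀).trans hwx₀))
      hwp hlt
  have hsub : Ioo α β ⊆ Icc 0 L :=
    Ioo_subset_Icc_self.trans (Icc_subset_Icc hα (hβ.trans hp.2))
  have hlen : β - α ≤ y' - y :=
    sub_le_sub_of_Ioo_subset_band hmono hident hyL hy'L hlt hsub hband
  have henergy : ∫ x in α..β, deriv w x ^ 2 ≤ E (v y') - E (v y) := by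
    have hadd := setIntegral_add_sublevelEnergy_le hw.continuous.measurable hint hlt.le
      fun x hx => ⟨(hband x hx).1, (hband x hx).2.le⟩
    rw [Measure.restrict_restrict_of_subset hsub, ← integral_Ioc_eq_integral_Ioo,
      ← integral_of_le hαβ.le] at hadd
    linarith
  have hftc : ∫ x in α..β, deriv w x = w β - w α :=
    integral_deriv_eq_sub (fun x _ => hw.differentiable one_ne_zero x)
      (hw'.intervalIntegrable _ _)
  calc (v y' - v y) ^ 2 ≤ (w β - w α) ^ 2 :=
        pow_le_pow_left₀ (sub_nonneg.2 hlt.le) (by linarith) 2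
    _ ≤ (β - α) * ∫ x in α..β, deriv w x ^ 2 :=
        hftc ▸ sq_intervalIntegral_le hαβ.le (hw'.intervalIntegrable _ _)
          ((hw'.pow 2).intervalIntegrable _ _)
    _ ≤ (y' - y) * (E (v y') - E (v y)) :=
        mul_le_mul hlen henergy (integral_nonneg hαβ.le fun _ _ => sq_nonneg _)
          (by linarith [hy'.1])

theorem integral_sq_deriv_le_of_identDistrib (hL : 0 ≤ L) (hw : ContDiff ℝ 1 w)
    (hw0 : w 0 = 0) (hwpos : ∀ x, 0 ≤ w x) (hv : DifferentiableOn ℝ v (Ioo 0 L))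
    (hmono : MonotoneOn v (Icc 0 L))
    (hident : IdentDistrib v w (volume.restrict (Icc 0 L)) (volume.restrict (Icc 0 L))) :
    ∫ x in (0 : ℝ)..L, deriv v x ^ 2 ≤ ∫ x in (0 : ℝ)..L, deriv w x ^ 2 := by
  set E := sublevelEnergy (volume.restrict (Icc 0 L)) w
  have hint : Integrable (fun x => deriv w x ^ 2) (volume.restrict (Icc 0 L)) :=
    ((hw.continuous_deriv le_rfl).pow 2).integrableOn_Icc
  calc ∫ x in (0 : ℝ)..L, deriv v x ^ 2 ≤ E (v L) - E (v 0) :=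
        integral_sq_deriv_le_of_sq_sub_le hL hv
          ((sublevelEnergy_mono hint).comp_monotoneOn hmono) fun _ hy _ hy' =>
            sq_sub_le_mul_sublevelEnergy_sub hw hw0 hwpos hmono hident hy hy'
    _ ≤ E (v L) := sub_le_self _ (sublevelEnergy_nonneg _)
    _ ≤ ∫ x in Icc 0 L, deriv w x ^ 2 := sublevelEnergy_le_integral hint _
    _ = ∫ x in (0 : ℝ)..L, deriv w x ^ 2 := by
        rw [integral_of_le hL, integral_Icc_eq_integral_Ioc]

end Rearrangement

/-- One-dimensional Pólya–Szegő inequality for the monotone increasing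
rearrangement (single-interval metric graph of total length `L`): if
`w ≥ 0` vanishes at the Dirichlet vertex `0` and `v : [0,L] → ℝ` is the
monotone increasing rearrangement of `w` (equimeasurable:
`|{v ≤ τ}| = |{w ≤ τ}|` for every `τ`), then
`½∫₀^L |v'|² - ∫₀^L v ≤ ½∫₀^L |w'|² - ∫₀^L w`. -/
theorem polya_szego_graph (L : ℝ) (hL : 0 < L) (w v : ℝ → ℝ)
    (hw : ContDiff ℝ 1 w) (hw0 : w 0 = 0) (hwpos : ∀ x, 0 ≤ w x)
    (hv : Differentiable ℝ v) (hmono : MonotoneOn v (Icc (0 : ℝ) L))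
    (hequi : ∀ τ : ℝ,
      volume {x ∈ Icc (0 : ℝ) L | v x ≤ τ} = volume {x ∈ Icc (0 : ℝ) L | w x ≤ τ}) :
    (1 / 2) * (∫ x in (0 : ℝ)..L, (deriv v x) ^ 2) - (∫ x in (0 : ℝ)..L, v x)
      ≤ (1 / 2) * (∫ x in (0 : ℝ)..L, (deriv w x) ^ 2) -
          (∫ x in (0 : ℝ)..L, w x) := by
  have hident : IdentDistrib v w (volume.restrict (Icc 0 L)) (volume.restrict (Icc 0 L)) :=
    identDistrib_of_measure_preimage_Iic_eq hv.continuous.aemeasurable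
      hw.continuous.aemeasurable fun τ => by
        rw [Measure.restrict_apply' measurableSet_Icc, Measure.restrict_apply' measurableSet_Icc,
          inter_comm, inter_comm _ (Icc _ _)]
        exact hequi τ
  have hmass : ∫ x in (0 : ℝ)..L, v x = ∫ x in (0 : ℝ)..L, w x := by
    simp only [integral_of_le hL.le, ← integral_Icc_eq_integral_Ioc]
    exact hident.integral_eq
  have henergy := integral_sq_deriv_le_of_identDistrib hL.le hw hw0 hwpos hv.differentiableOn
    hmono hident
  linarith
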